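/- Let X be a path-connected topological space, A ⊆ X a path-connected subspace, and f : X̃ → X a path-connected covering map such that Ã = f⁻¹(A) is path-connected and the inclusion-induced map π₁(Ã) → π₁(X̃) is an isomorphism. Then the inclusion-induced map π₁(A) → π₁(X) is surjective. -/

import Mathlib

/-!
Lift a path `σ` in `X` from `f b₀` to a point of `A` to a path `Γ` in `X̃` starting at `b₀`.
Its endpoint lies in `Ã = f⁻¹(A)`, so closing `Γ` up by a path `δ` inside `Ã` gives a loop
at `b₀`, which by surjectivity of `π₁(Ã) → π₁(X̃)` is homotopic to a loop `r` in `Ã`.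
Then `σ = f ∘ Γ ≃ f ∘ (r · δ⁻¹)`, and `r · δ⁻¹` lies in `Ã`, so its image lies in `A`.
-/

open CategoryTheory

/-- The homomorphism on fundamental groups induced by a continuous map. -/
noncomputable def π₁ind {X Y : Type} [TopologicalSpace X] [TopologicalSpace Y]
    (f : C(X, Y)) (x : X) : FundamentalGroup X x →* FundamentalGroup Y (f x) :=
  Functor.mapEnd (FundamentalGroupoid.mk x)
    (FundamentalGroupoid.fundamentalGroupoidFunctor.map (X := TopCat.of X) (Y := TopCat.of Y) (TopCat.ofHom f))

theorem Path.Homotopic.Quotient.map_trans {X Y : Type*} [TopologicalSpace X] [TopologicalSpace Y]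
    {x₀ x₁ x₂ : X} (P : Path.Homotopic.Quotient x₀ x₁) (Q : Path.Homotopic.Quotient x₁ x₂)
    (g : C(X, Y)) : (P.trans Q).map g = (P.map g).trans (Q.map g) :=
  (FundamentalGroupoid.map g).map_comp (X := ⟨x₀⟩) (Y := ⟨x₁⟩) (Z := ⟨x₂⟩) P Q

theorem IsCoveringMap.exists_path_lift {E X : Type*} [TopologicalSpace E] [TopologicalSpace X]
    {p : E → X} (hp : IsCoveringMap p) {e : E} {y : X} (γ : Path (p e) y) :
    ∃ (e' : E) (Γ : Path e e'), ∀ t, p (Γ t) = γ t :=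
  ⟨_, ⟨hp.liftPath γ e γ.source, hp.liftPath_zero .., rfl⟩,
    fun t => congrFun (hp.liftPath_lifts γ e γ.source) t⟩

/- Stated for paths ending anywhere in `A` rather than for loops: both endpoints are then
variables, and can be replaced by `f b` and `f e` without casts. -/
theorem IsCoveringMap.exists_map_subtypeVal_eq_of_surjective {E X : Type*} [TopologicalSpace E]
    [TopologicalSpace X] {f : E → X} (hf : IsCoveringMap f) {A : Set X}
    (hAt : IsPathConnected (f ⁻¹' A)) (b : f ⁻¹' A)
    (hsurj : Function.Surjective
      (FundamentalGroup.map (⟨Subtype.val, continuous_subtype_val⟩ : C(f ⁻¹' A, E)) b))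
    {y : X} (hy : y ∈ A) (σ : Path (f b) y) :
    ∃ κ : Path.Homotopic.Quotient (⟨f b, b.2⟩ : A) ⟨y, hy⟩,
      κ.map ⟨Subtype.val, continuous_subtype_val⟩ = .mk σ := by
  set ι : C(f ⁻¹' A, E) := ⟨Subtype.val, continuous_subtype_val⟩
  let fC : C(E, X) := ⟨f, hf.continuous⟩
  let fA : C(f ⁻¹' A, A) :=
    ⟨fun z => ⟨f z, z.2⟩, (hf.continuous.comp continuous_subtype_val).subtype_mk _⟩
  obtain ⟨e, Γ, hΓ⟩ := hf.exists_path_lift σ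
  obtain rfl : f e = y := by simpa using hΓ 1
  have hΓσ : Γ.map fC.continuous = σ := Path.ext (funext hΓ)
  let δ : Path (⟨e, hy⟩ : f ⁻¹' A) b := (hAt.joinedIn e hy b b.2).joined_subtype.somePath
  obtain ⟨r, hr⟩ := hsurj (.mk (Γ.trans (δ.map ι.continuous)))
  set ρ : Path.Homotopic.Quotient b b := FundamentalGroup.toPath r
  have hρ : ρ.map ι = .mk (Γ.trans (δ.map ι.continuous)) := hr
  have hlift : (ρ.trans (.mk δ.symm)).map ι = .mk Γ := by
    rw [Path.Homotopic.Quotient.map_trans, hρ, ← Path.Homotopic.Quotient.mk_map,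
      ← Path.map_symm, Path.Homotopic.Quotient.mk_symm, Path.Homotopic.Quotient.mk_trans,
      Path.Homotopic.Quotient.trans_assoc, Path.Homotopic.Quotient.trans_symm,
      Path.Homotopic.Quotient.trans_refl]
  refine ⟨(ρ.trans (.mk δ.symm)).map fA, ?_⟩
  calc ((ρ.trans (.mk δ.symm)).map fA).map ⟨Subtype.val, continuous_subtype_val⟩
      = ((ρ.trans (.mk δ.symm)).map ι).map fC := by
        rw [← Path.Homotopic.Quotient.map_comp, ← Path.Homotopic.Quotient.map_comp]; rfl
    _ = .mk σ := by rw [hlift, ← Path.Homotopic.Quotient.mk_map, hΓσ]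

theorem stmt_1_general {X Xt : Type} [TopologicalSpace X] [TopologicalSpace Xt]
    (f : Xt → X) (hf : IsCoveringMap f)
    (A : Set X) (hAt : IsPathConnected (f ⁻¹' A))
    (a₀ : A) (b₀ : (f ⁻¹' A : Set Xt)) (hbase : f ↑b₀ = ↑a₀)
    (hiso : Function.Bijective
      (π₁ind (⟨Subtype.val, continuous_subtype_val⟩ : C((f ⁻¹' A : Set Xt), Xt)) b₀)) :
    Function.Surjective (π₁ind (⟨Subtype.val, continuous_subtype_val⟩ : C(A, X)) a₀) := by
  obtain ⟨a, ha⟩ := a₀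
  obtain rfl : f b₀ = a := hbase
  intro σ
  induction σ using Path.Homotopic.Quotient.ind with | mk σ =>
  exact hf.exists_map_subtypeVal_eq_of_surjective hAt b₀ hiso.2 ha σ

/-- Statement: X path-connected, A ⊆ X path-connected, f : X̃ → X a covering with X̃
path-connected, Ã = f⁻¹(A) path-connected, basepoints chosen compatibly, and the
inclusion Ã ↪ X̃ inducing an isomorphism on fundamental groups.  Then the inclusion
A ↪ X induces the stated property on fundamental groups. -/
theorem stmt_1 {X Xt : Type} [TopologicalSpace X] [TopologicalSpace Xt]
    [PathConnectedSpace X] [PathConnectedSpace Xt]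
    (f : Xt → X) (hf : IsCoveringMap f)
    (A : Set X) (hA : IsPathConnected A) (hAt : IsPathConnected (f ⁻¹' A))
    (a₀ : A) (b₀ : (f ⁻¹' A : Set Xt)) (hbase : f ↑b₀ = ↑a₀)
    (hiso : Function.Bijective
      (π₁ind (⟨Subtype.val, continuous_subtype_val⟩ : C((f ⁻¹' A : Set Xt), Xt)) b₀)) :
    Function.Surjective (π₁ind (⟨Subtype.val, continuous_subtype_val⟩ : C(A, X)) a₀) :=
  stmt_1_general f hf A hAt a₀ b₀ hbase hiso
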